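/- arXiv:2406.15702 — 5 statements merged into one kernel-verified Lean document; each statement's English description precedes it below -/
import Mathlib

section
/- Fix an integer s ≥ 1 and x ∈ ℝ. Assume δ_{11} > 0 and δ_{10} > 0, and let Y̲^A, Y̲^B ∈ ℝ satisfy Y̲^A ≤ Y^A_i and Y̲^B ≤ Y^B_i for all units i, with Y̲^A ≤ x and Y̲^B ≤ x. Then: (i) E_A[g_{s,x} | 1,1]·δ_{11} + E_A[g_{s,x} | 1,0]·δ_{10} ≤ D^s_A(x) ≤ E_A[g_{s,x} | 1,1]·δ_{11} + E_A[g_{s,x} | 1,0]·δ_{10} + ((x − Y̲^A)^{s−1}/(s−1)!)·δ_{00}; and (ii) E_B[g_{s,x} | 1,1]·δ_{11} ≤ D^s_B(x) ≤ E_B[g_{s,x} | 1,1]·δ_{11} + ((x − Y̲^B)^{s−1}/(s−1)!)·(δ_{00} + δ_{10}). (Worst-case identification bounds for the dominance functions under no assumption on nonresponse, Proposition D.1.) -/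
/-!
Split the population into the response classes `(1,1)`, `(1,0)` and `(0,0)` (the class `(0,1)`
is empty). The contribution `E[g | a,b] · δ_{ab}` of each class to `D^s(x)` is the class sum of
`g_{s,x}(Y_i)` divided by `N`, and since `0 ≤ g_{s,x}(y) ≤ (x - Y̲)^{s-1}/(s-1)!` whenever
`Y̲ ≤ y` and `Y̲ ≤ x`, a class whose outcomes are unobserved contributes between `0` and
`(x - Y̲)^{s-1}/(s-1)! · δ_{ab}`.
-/

open Finset

noncomputable section

/-- Fraction of units in the response class `(a, b)`. -/
def delta {N : ℕ} (ZA ZB : Fin N → Bool) (a b : Bool) : ℝ :=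
  ((univ.filter (fun i => ZA i = a ∧ ZB i = b)).card : ℝ) / N

/-- Conditional mean of `g ∘ Y` given the response class `(a, b)`. -/
def condMean {N : ℕ} (Y : Fin N → ℝ) (ZA ZB : Fin N → Bool) (a b : Bool) (g : ℝ → ℝ) : ℝ :=
  (∑ i ∈ univ.filter (fun i => ZA i = a ∧ ZB i = b), g (Y i)) / ((N : ℝ) * delta ZA ZB a b)

/-- Conditional CDF of `Y` given the response class `(a, b)`. -/
def condCDF' {N : ℕ} (Y : Fin N → ℝ) (ZA ZB : Fin N → Bool) (a b : Bool) (x : ℝ) : ℝ :=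
  ((univ.filter (fun i => Y i ≤ x ∧ ZA i = a ∧ ZB i = b)).card : ℝ) / ((N : ℝ) * delta ZA ZB a b)

/-- Population CDF of `Y`. -/
def popCDF {N : ℕ} (Y : Fin N → ℝ) (x : ℝ) : ℝ :=
  ((univ.filter (fun i => Y i ≤ x)).card : ℝ) / N

/-- `s`-th order dominance function of the population `Y`. -/
def domFn {N : ℕ} (Y : Fin N → ℝ) (s : ℕ) (x : ℝ) : ℝ :=
  (∑ i ∈ univ.filter (fun i => Y i ≤ x), (x - Y i) ^ (s - 1) / ((s - 1).factorial : ℝ)) / N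

/-- `g_{s,x}(y) = ((x-y)^{s-1}/(s-1)!) 1[y ≤ x]`. -/
def gfun (s : ℕ) (x : ℝ) : ℝ → ℝ :=
  fun y => ((x - y) ^ (s - 1) / ((s - 1).factorial : ℝ)) * (if y ≤ x then 1 else 0)

section ResponseClasses

variable {N : ℕ} (Y : Fin N → ℝ) (ZA ZB : Fin N → Bool)

/-- No positivity of `δ_{ab}` is needed: if it vanishes, either `N = 0` or the class is empty. -/
theorem condMean_mul_delta (a b : Bool) (g : ℝ → ℝ) :
    condMean Y ZA ZB a b g * delta ZA ZB a b
      = (∑ i ∈ univ.filter (fun i => ZA i = a ∧ ZB i = b), g (Y i)) / N := by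
  rcases eq_or_ne (delta ZA ZB a b) 0 with h | h
  · rw [h, mul_zero]
    rcases div_eq_zero_iff.mp h with hcard | hN
    · rw [card_eq_zero.mp (Nat.cast_eq_zero.mp hcard), sum_empty, zero_div]
    · rw [hN, div_zero]
  · have hN : (N : ℝ) ≠ 0 := fun hN => h (by simp [delta, hN])
    unfold condMean
    field_simp

theorem condMean_mul_delta_nonneg (a b : Bool) {g : ℝ → ℝ} (hg : ∀ i, 0 ≤ g (Y i)) :
    0 ≤ condMean Y ZA ZB a b g * delta ZA ZB a b := by
  rw [condMean_mul_delta]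
  exact div_nonneg (sum_nonneg fun i _ => hg i) N.cast_nonneg

theorem condMean_mul_delta_le (a b : Bool) {g : ℝ → ℝ} {c : ℝ} (hg : ∀ i, g (Y i) ≤ c) :
    condMean Y ZA ZB a b g * delta ZA ZB a b ≤ c * delta ZA ZB a b := by
  rw [condMean_mul_delta, delta, mul_div_assoc', mul_comm, ← nsmul_eq_mul]
  exact div_le_div_of_nonneg_right (sum_le_card_nsmul _ _ _ fun i _ => hg i) N.cast_nonneg

variable {ZA ZB}

theorem sum_eq_sum_responseClasses (hno : ∀ i, ¬(ZA i = false ∧ ZB i = true))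
    (f : Fin N → ℝ) :
    ∑ i, f i = ∑ i ∈ univ.filter (fun i => ZA i = true ∧ ZB i = true), f i
      + ∑ i ∈ univ.filter (fun i => ZA i = true ∧ ZB i = false), f i
      + ∑ i ∈ univ.filter (fun i => ZA i = false ∧ ZB i = false), f i := by
  simp only [sum_filter, ← sum_add_distrib]
  refine sum_congr rfl fun i _ => ?_
  have := hno i
  cases hA : ZA i <;> cases hB : ZB i <;> simp_all

theorem sum_div_eq_sum_condMean_mul_delta (hno : ∀ i, ¬(ZA i = false ∧ ZB i = true))
    (g : ℝ → ℝ) :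
    (∑ i, g (Y i)) / N = condMean Y ZA ZB true true g * delta ZA ZB true true
      + condMean Y ZA ZB true false g * delta ZA ZB true false
      + condMean Y ZA ZB false false g * delta ZA ZB false false := by
  simp only [condMean_mul_delta, sum_eq_sum_responseClasses hno, add_div]

end ResponseClasses

theorem gfun_nonneg (s : ℕ) (x y : ℝ) : 0 ≤ gfun s x y := by
  unfold gfun
  split_ifs with h
  · rw [mul_one]
    exact div_nonneg (pow_nonneg (sub_nonneg.mpr h) _) (Nat.cast_nonneg _)
  · rw [mul_zero]

theorem gfun_le (s : ℕ) {x y l : ℝ} (hy : l ≤ y) (hx : l ≤ x) :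
    gfun s x y ≤ (x - l) ^ (s - 1) / ((s - 1).factorial : ℝ) := by
  unfold gfun
  split_ifs with h
  · rw [mul_one]
    gcongr
  · rw [mul_zero]
    exact div_nonneg (pow_nonneg (sub_nonneg.mpr hx) _) (Nat.cast_nonneg _)

theorem domFn_eq_sum_gfun {N : ℕ} (Y : Fin N → ℝ) (s : ℕ) (x : ℝ) :
    domFn Y s x = (∑ i, gfun s x (Y i)) / N := by
  unfold domFn gfun
  rw [sum_filter]
  congr 1
  refine sum_congr rfl fun i _ => ?_
  split_ifs <;> simp

theorem worst_case_bounds_general {N : ℕ}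
    (YA YB : Fin N → ℝ) (ZA ZB : Fin N → Bool)
    (hno : ∀ i, ¬(ZA i = false ∧ ZB i = true))
    (s : ℕ) (x : ℝ)
    (YlA YlB : ℝ)
    (hYA : ∀ i, YlA ≤ YA i) (hYB : ∀ i, YlB ≤ YB i)
    (hAx : YlA ≤ x) (hBx : YlB ≤ x) :
    (condMean YA ZA ZB true true (gfun s x) * delta ZA ZB true true
        + condMean YA ZA ZB true false (gfun s x) * delta ZA ZB true false
      ≤ domFn YA s x ∧
      domFn YA s x ≤
        condMean YA ZA ZB true true (gfun s x) * delta ZA ZB true true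
        + condMean YA ZA ZB true false (gfun s x) * delta ZA ZB true false
        + ((x - YlA) ^ (s - 1) / ((s - 1).factorial : ℝ)) * delta ZA ZB false false) ∧
    (condMean YB ZA ZB true true (gfun s x) * delta ZA ZB true true ≤ domFn YB s x ∧
      domFn YB s x ≤
        condMean YB ZA ZB true true (gfun s x) * delta ZA ZB true true
        + ((x - YlB) ^ (s - 1) / ((s - 1).factorial : ℝ))
            * (delta ZA ZB false false + delta ZA ZB true false)) := by
  have splitA := sum_div_eq_sum_condMean_mul_delta YA hno (gfun s x)
  have splitB := sum_div_eq_sum_condMean_mul_delta YB hno (gfun s x)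
  rw [← domFn_eq_sum_gfun] at splitA splitB
  have nonneg (Y : Fin N → ℝ) (a b : Bool) :=
    condMean_mul_delta_nonneg Y ZA ZB a b fun i => gfun_nonneg s x (Y i)
  have le_A (a b : Bool) := condMean_mul_delta_le YA ZA ZB a b fun i => gfun_le s (hYA i) hAx
  have le_B (a b : Bool) := condMean_mul_delta_le YB ZA ZB a b fun i => gfun_le s (hYB i) hBx
  refine ⟨⟨?_, ?_⟩, ?_, ?_⟩
  · linarith [nonneg YA false false]
  · linarith [le_A false false]
  · linarith [nonneg YB true false, nonneg YB false false]
  · linarith [le_B true false, le_B false false]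

/-- Proposition D.1 (worst-case identification bounds for the dominance functions
under no assumption on nonresponse). -/
theorem worst_case_bounds {N : ℕ} (hN : 1 ≤ N)
    (YA YB : Fin N → ℝ) (ZA ZB : Fin N → Bool)
    (hno : ∀ i, ¬(ZA i = false ∧ ZB i = true))
    (s : ℕ) (hs : 1 ≤ s) (x : ℝ)
    (h11 : 0 < delta ZA ZB true true) (h10 : 0 < delta ZA ZB true false)
    (YlA YlB : ℝ)
    (hYA : ∀ i, YlA ≤ YA i) (hYB : ∀ i, YlB ≤ YB i)
    (hAx : YlA ≤ x) (hBx : YlB ≤ x) :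
    (condMean YA ZA ZB true true (gfun s x) * delta ZA ZB true true
        + condMean YA ZA ZB true false (gfun s x) * delta ZA ZB true false
      ≤ domFn YA s x ∧
      domFn YA s x ≤
        condMean YA ZA ZB true true (gfun s x) * delta ZA ZB true true
        + condMean YA ZA ZB true false (gfun s x) * delta ZA ZB true false
        + ((x - YlA) ^ (s - 1) / ((s - 1).factorial : ℝ)) * delta ZA ZB false false) ∧
    (condMean YB ZA ZB true true (gfun s x) * delta ZA ZB true true ≤ domFn YB s x ∧
      domFn YB s x ≤
        condMean YB ZA ZB true true (gfun s x) * delta ZA ZB true true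
        + ((x - YlB) ^ (s - 1) / ((s - 1).factorial : ℝ))
            * (delta ZA ZB false false + delta ZA ZB true false)) :=
  worst_case_bounds_general YA YB ZA ZB hno s x YlA YlB hYA hYB hAx hBx
end
end

section
/- Fix x ∈ ℝ with #{i : Y^A_i ≤ x} > 0, assume δ_{11} > 0 and δ_{10} > 0, and let ℓ, u ∈ [0,1] satisfy δ_{00}·ℓ ≤ P_A(x) ≤ u·δ_{00} and 1 − u·δ_{00} > 0. Then (F_A(x | 1,1)·δ_{11} + F_A(x | 1,0)·δ_{10})/(1 − ℓ·δ_{00}) ≤ F_A(x) ≤ (F_A(x | 1,1)·δ_{11} + F_A(x | 1,0)·δ_{10})/(1 − u·δ_{00}). (The first-order case, s = 1, for population A of Proposition D.3 on identification bounds under restrictions on the unit-nonresponse propensity, established in its proof.) -/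
open Finset

noncomputable section

/-- Unit-nonresponse propensity in population A conditional on the outcome being at most `x`. -/
def propA {N : ℕ} (YA : Fin N → ℝ) (ZA ZB : Fin N → Bool) (x : ℝ) : ℝ :=
  ((univ.filter (fun i => YA i ≤ x ∧ ZA i = false ∧ ZB i = false)).card : ℝ) /
    ((univ.filter (fun i => YA i ≤ x)).card : ℝ)

/-- The first-order (s = 1) case for population A of Proposition D.3: identification
bounds for `F_A(x)` under U-shape-type restrictions on the unit-nonresponse propensity. -/
theorem propensity_bounds_A {N : ℕ} (hN : 1 ≤ N)
    (YA YB : Fin N → ℝ) (ZA ZB : Fin N → Bool)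
    (hno : ∀ i, ¬(ZA i = false ∧ ZB i = true))
    (x : ℝ) (hcard : 0 < (univ.filter (fun i => YA i ≤ x)).card)
    (h11 : 0 < delta ZA ZB true true) (h10 : 0 < delta ZA ZB true false)
    (l u : ℝ) (hl : l ∈ Set.Icc (0 : ℝ) 1) (hu : u ∈ Set.Icc (0 : ℝ) 1)
    (hlow : delta ZA ZB false false * l ≤ propA YA ZA ZB x)
    (hhigh : propA YA ZA ZB x ≤ u * delta ZA ZB false false)
    (hpos : 0 < 1 - u * delta ZA ZB false false) :
    (condCDF' YA ZA ZB true true x * delta ZA ZB true true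
        + condCDF' YA ZA ZB true false x * delta ZA ZB true false)
        / (1 - l * delta ZA ZB false false)
      ≤ popCDF YA x ∧
    popCDF YA x ≤
      (condCDF' YA ZA ZB true true x * delta ZA ZB true true
        + condCDF' YA ZA ZB true false x * delta ZA ZB true false)
        / (1 - u * delta ZA ZB false false) := by
  classical
  have hN0 : (0:ℝ) < N := by exact_mod_cast Nat.lt_of_lt_of_le Nat.zero_lt_one hN
  set M : ℕ := (univ.filter (fun i => YA i ≤ x)).card with hM
  set m11 : ℕ := (univ.filter (fun i => YA i ≤ x ∧ ZA i = true ∧ ZB i = true)).card with hm11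
  set m10 : ℕ := (univ.filter (fun i => YA i ≤ x ∧ ZA i = true ∧ ZB i = false)).card with hm10
  set m00 : ℕ := (univ.filter (fun i => YA i ≤ x ∧ ZA i = false ∧ ZB i = false)).card with hm00
  have hsplit : M = m11 + m10 + m00 := by
    rw [hM, hm11, hm10, hm00, Finset.card_filter, Finset.card_filter, Finset.card_filter,
        Finset.card_filter, ← Finset.sum_add_distrib, ← Finset.sum_add_distrib]
    refine Finset.sum_congr rfl fun i _ => ?_
    have h := hno i
    cases hZA : ZA i <;> cases hZB : ZB i <;> simp_all
  have hMpos : (0:ℝ) < M := by exact_mod_cast hcard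
  have hprop : propA YA ZA ZB x = (m00 : ℝ) / M := rfl
  have hc11 : condCDF' YA ZA ZB true true x * delta ZA ZB true true = (m11 : ℝ) / N := by
    rw [condCDF']
    field_simp
    rw [← hm11]
  have hc10 : condCDF' YA ZA ZB true false x * delta ZA ZB true false = (m10 : ℝ) / N := by
    rw [condCDF']
    field_simp
    rw [← hm10]
  have hpop : popCDF YA x = (M : ℝ) / N := rfl
  set P := propA YA ZA ZB x with hP
  set D00 := delta ZA ZB false false with hD00
  have hnum : (m11 : ℝ) / N + (m10 : ℝ) / N = (M : ℝ) / N * (1 - P) := by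
    have hMR : (M : ℝ) = (m11 : ℝ) + m10 + m00 := by exact_mod_cast hsplit
    rw [hprop]
    field_simp
    rw [hMR]; ring
  have hl' : l * D00 ≤ P := by rw [mul_comm]; exact hlow
  have hub : 1 - u * D00 ≤ 1 - P := by linarith
  have hlb : 1 - P ≤ 1 - l * D00 := by linarith
  have hposl : 0 < 1 - l * D00 := lt_of_lt_of_le hpos (by linarith)
  have hD : 0 < (M : ℝ) / N := div_pos hMpos hN0
  rw [hc11, hc10, hpop, hnum]
  constructor
  · rw [div_le_iff₀ hposl]
    nlinarith
  · rw [le_div_iff₀ hpos]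
    nlinarith
end
end

section
/- Fix x ∈ ℝ with #{i : Y^B_i ≤ x} > 0, assume δ_{11} > 0, and let ℓ_{00}, u_{00}, ℓ_{10}, u_{10} ∈ [0,1] satisfy δ_{00}·ℓ_{00} ≤ Q^B_{00}(x) ≤ u_{00}·δ_{00}, δ_{10}·ℓ_{10} ≤ Q^B_{10}(x) ≤ u_{10}·δ_{10}, and 1 − u_{00}·δ_{00} − u_{10}·δ_{10} > 0. Then F_B(x | 1,1)·δ_{11}/(1 − ℓ_{00}·δ_{00} − ℓ_{10}·δ_{10}) ≤ F_B(x) ≤ F_B(x | 1,1)·δ_{11}/(1 − u_{00}·δ_{00} − u_{10}·δ_{10}). (The first-order case, s = 1, for population B of Proposition D.3 on identification bounds under restrictions on the unit- and wave-nonresponse propensities, established in its proof.) -/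
open Finset

noncomputable section

/-- Unit-nonresponse propensity in population B conditional on the outcome being at most `x`. -/
def propB00 {N : ℕ} (YB : Fin N → ℝ) (ZA ZB : Fin N → Bool) (x : ℝ) : ℝ :=
  ((univ.filter (fun i => YB i ≤ x ∧ ZA i = false ∧ ZB i = false)).card : ℝ) /
    ((univ.filter (fun i => YB i ≤ x)).card : ℝ)

/-- Wave-nonresponse propensity in population B conditional on the outcome being at most `x`. -/
def propB10 {N : ℕ} (YB : Fin N → ℝ) (ZA ZB : Fin N → Bool) (x : ℝ) : ℝ :=
  ((univ.filter (fun i => YB i ≤ x ∧ ZA i = true ∧ ZB i = false)).card : ℝ) /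
    ((univ.filter (fun i => YB i ≤ x)).card : ℝ)

/-- The first-order (s = 1) case for population B of Proposition D.3: identification
bounds for `F_B(x)` under restrictions on the unit- and wave-nonresponse propensities. -/
theorem propensity_bounds_B {N : ℕ} (hN : 1 ≤ N)
    (YA YB : Fin N → ℝ) (ZA ZB : Fin N → Bool)
    (hno : ∀ i, ¬(ZA i = false ∧ ZB i = true))
    (x : ℝ) (hcard : 0 < (univ.filter (fun i => YB i ≤ x)).card)
    (h11 : 0 < delta ZA ZB true true)
    (l00 u00 l10 u10 : ℝ)
    (hl00 : l00 ∈ Set.Icc (0 : ℝ) 1) (hu00 : u00 ∈ Set.Icc (0 : ℝ) 1)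
    (hl10 : l10 ∈ Set.Icc (0 : ℝ) 1) (hu10 : u10 ∈ Set.Icc (0 : ℝ) 1)
    (hlow00 : delta ZA ZB false false * l00 ≤ propB00 YB ZA ZB x)
    (hhigh00 : propB00 YB ZA ZB x ≤ u00 * delta ZA ZB false false)
    (hlow10 : delta ZA ZB true false * l10 ≤ propB10 YB ZA ZB x)
    (hhigh10 : propB10 YB ZA ZB x ≤ u10 * delta ZA ZB true false)
    (hpos : 0 < 1 - u00 * delta ZA ZB false false - u10 * delta ZA ZB true false) :
    condCDF' YB ZA ZB true true x * delta ZA ZB true true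
        / (1 - l00 * delta ZA ZB false false - l10 * delta ZA ZB true false)
      ≤ popCDF YB x ∧
    popCDF YB x ≤
      condCDF' YB ZA ZB true true x * delta ZA ZB true true
        / (1 - u00 * delta ZA ZB false false - u10 * delta ZA ZB true false) := by

  classical
  -- split the count of {Y ≤ x} into the three response classes
  have hsplit : (univ.filter (fun i => YB i ≤ x)).card
      = (univ.filter (fun i => YB i ≤ x ∧ ZA i = false ∧ ZB i = false)).card
      + (univ.filter (fun i => YB i ≤ x ∧ ZA i = true ∧ ZB i = false)).card
      + (univ.filter (fun i => YB i ≤ x ∧ ZA i = true ∧ ZB i = true)).card := by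
    rw [Finset.card_filter, Finset.card_filter, Finset.card_filter, Finset.card_filter,
      ← Finset.sum_add_distrib, ← Finset.sum_add_distrib]
    refine Finset.sum_congr rfl fun i _ => ?_
    have := hno i
    by_cases h : YB i ≤ x <;> cases hA : ZA i <;> cases hB : ZB i <;> simp_all
  set c : ℝ := ((univ.filter (fun i => YB i ≤ x)).card : ℝ) with hc
  set c00 : ℝ := ((univ.filter (fun i => YB i ≤ x ∧ ZA i = false ∧ ZB i = false)).card : ℝ)
  set c10 : ℝ := ((univ.filter (fun i => YB i ≤ x ∧ ZA i = true ∧ ZB i = false)).card : ℝ)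
  set c11 : ℝ := ((univ.filter (fun i => YB i ≤ x ∧ ZA i = true ∧ ZB i = true)).card : ℝ)
  have hsum : c = c00 + c10 + c11 := by
    simp only [hc, hsplit]; push_cast; ring
  have hcpos : (0 : ℝ) < c := by rw [hc]; exact_mod_cast hcard
  have hNpos : (0 : ℝ) < N := by exact_mod_cast hN
  set d00 : ℝ := delta ZA ZB false false
  set d10 : ℝ := delta ZA ZB true false
  set d11 : ℝ := delta ZA ZB true true
  have hc00 : 0 ≤ c00 := Nat.cast_nonneg _
  have hc10 : 0 ≤ c10 := Nat.cast_nonneg _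
  have hc11 : 0 ≤ c11 := Nat.cast_nonneg _
  have hQ00 : propB00 YB ZA ZB x = c00 / c := rfl
  have hQ10 : propB10 YB ZA ZB x = c10 / c := rfl
  rw [hQ00] at hlow00 hhigh00
  rw [hQ10] at hlow10 hhigh10
  -- turn the propensity bounds into bounds on c00, c10
  have hb00l : c * (d00 * l00) ≤ c00 := by
    rw [div_le_iff₀ hcpos] at hhigh00
    have := (le_div_iff₀ hcpos).mp hlow00
    linarith
  have hb00u : c00 ≤ c * (u00 * d00) := by
    rw [div_le_iff₀ hcpos] at hhigh00; linarith
  have hb10l : c * (d10 * l10) ≤ c10 := by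
    have := (le_div_iff₀ hcpos).mp hlow10; linarith
  have hb10u : c10 ≤ c * (u10 * d10) := by
    rw [div_le_iff₀ hcpos] at hhigh10; linarith
  -- condCDF' * delta = c11 / N
  have hNne : (N : ℝ) ≠ 0 := ne_of_gt hNpos
  have hd11ne : d11 ≠ 0 := ne_of_gt h11
  have hcond : condCDF' YB ZA ZB true true x * d11 = c11 / N := by
    show c11 / ((N : ℝ) * d11) * d11 = c11 / N
    field_simp
  have hpop : popCDF YB x = c / N := rfl
  rw [hcond, hpop]
  clear_value c c00 c10 c11 d00 d10 d11
  set Dl : ℝ := 1 - l00 * d00 - l10 * d10 with hDl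
  set Du : ℝ := 1 - u00 * d00 - u10 * d10 with hDu
  clear_value Dl Du
  have hkeyl : c11 ≤ c * Dl := by
    have : c11 = c - c00 - c10 := by linarith
    rw [this, hDl]; nlinarith [hb00l, hb10l]
  have hkeyu : c * Du ≤ c11 := by
    have : c11 = c - c00 - c10 := by linarith
    rw [this, hDu]; nlinarith [hb00u, hb10u]
  constructor
  · -- lower bound
    have hDl0 : 0 ≤ Dl := by nlinarith
    rcases eq_or_lt_of_le hDl0 with h0 | h0
    · rw [← h0, div_zero]
      positivity
    · rw [div_le_iff₀ h0, div_mul_eq_mul_div, div_le_div_iff₀ hNpos hNpos]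
      exact mul_le_mul_of_nonneg_right hkeyl hNpos.le
  · -- upper bound
    rw [le_div_iff₀ hpos]
    rw [div_mul_eq_mul_div, div_le_div_iff₀ hNpos hNpos]
    exact mul_le_mul_of_nonneg_right hkeyu hNpos.le
end
end

section
/- Let U be a nonempty finite set with n := |U|, let W : U → ℝ satisfy W_i > 0 for all i ∈ U and Σ_{i∈U} W_i = n, let H : U → ℝ, and let κ ∈ ℝ satisfy n + κ·H_i > 0 for all i ∈ U, Σ_{i∈U} W_i/(n + κ·H_i) = 1 and Σ_{i∈U} W_i·H_i/(n + κ·H_i) = 0. Then for every p : U → ℝ with p_i > 0 for all i, Σ_{i∈U} W_i·p_i = 1 and Σ_{i∈U} W_i·p_i·H_i = 0, one has Σ_{i∈U} W_i·log p_i ≤ Σ_{i∈U} W_i·log( 1/(n + κ·H_i) ). (The probabilities p_i = 1/(n + κ·H_i) arising from the Lagrangian first-order conditions maximize the constrained pseudo-empirical likelihood problem.) -/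
open Finset

/-- The probabilities `p_i = 1/(n + κ·H_i)` arising from the Lagrangian first-order
conditions maximize the constrained pseudo-empirical likelihood problem. -/
theorem pel_constrained_maximum
    (U : Type*) [Fintype U] [Nonempty U]
    (W : U → ℝ) (hW : ∀ i, 0 < W i)
    (hsum : ∑ i, W i = (Fintype.card U : ℝ))
    (H : U → ℝ) (κ : ℝ)
    (hpos : ∀ i, 0 < (Fintype.card U : ℝ) + κ * H i)
    (hc1 : ∑ i, W i / ((Fintype.card U : ℝ) + κ * H i) = 1)
    (hc2 : ∑ i, W i * H i / ((Fintype.card U : ℝ) + κ * H i) = 0) :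
    ∀ p : U → ℝ, (∀ i, 0 < p i) → (∑ i, W i * p i = 1) → (∑ i, W i * p i * H i = 0) →
      ∑ i, W i * Real.log (p i)
        ≤ ∑ i, W i * Real.log (1 / ((Fintype.card U : ℝ) + κ * H i)) := by
  intro p hp h1 h2
  set n : ℝ := (Fintype.card U : ℝ) with hn
  have key : ∑ i, W i * (Real.log (p i) - Real.log (1 / (n + κ * H i))) ≤ 0 := by
    have hb : ∀ i, W i * (Real.log (p i) - Real.log (1 / (n + κ * H i)))
        ≤ W i * (p i * (n + κ * H i) - 1) := by
      intro i
      apply mul_le_mul_of_nonneg_left _ (hW i).le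
      have h := Real.log_le_sub_one_of_pos (mul_pos (hp i) (hpos i))
      have hlog : Real.log (p i * (n + κ * H i))
          = Real.log (p i) - Real.log (1 / (n + κ * H i)) := by
        rw [Real.log_mul (hp i).ne' (hpos i).ne',
          Real.log_div one_ne_zero (hpos i).ne', Real.log_one]
        ring
      linarith [hlog ▸ h]
    calc ∑ i, W i * (Real.log (p i) - Real.log (1 / (n + κ * H i)))
        ≤ ∑ i, W i * (p i * (n + κ * H i) - 1) :=
          Finset.sum_le_sum fun i _ => hb i
      _ = n * (∑ i, W i * p i) + κ * (∑ i, W i * p i * H i) - ∑ i, W i := by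
          rw [Finset.mul_sum, Finset.mul_sum, ← Finset.sum_add_distrib,
            ← Finset.sum_sub_distrib]
          exact Finset.sum_congr rfl fun i _ => by ring
      _ = 0 := by rw [h1, h2, hsum]; ring
  have hsplit : ∑ i, W i * (Real.log (p i) - Real.log (1 / (n + κ * H i)))
      = ∑ i, W i * Real.log (p i) - ∑ i, W i * Real.log (1 / (n + κ * H i)) := by
    rw [← Finset.sum_sub_distrib]
    exact Finset.sum_congr rfl fun i _ => by ring
  linarith [hsplit ▸ key]
end

section
/- Let U be a nonempty finite set with n := |U|, let W : U → ℝ satisfy W_i > 0 for all i ∈ U and Σ_{i∈U} W_i = n, let H : U → ℝ, and let κ ∈ ℝ satisfy n + κ·H_i > 0 for all i ∈ U, Σ_{i∈U} W_i/(n + κ·H_i) = 1 and Σ_{i∈U} W_i·H_i/(n + κ·H_i) = 0. Define L_UR := Σ_{i∈U} W_i·log(1/n) and L_R := sup { Σ_{i∈U} W_i·log p_i : p : U → ℝ, p_i > 0 for all i, Σ_{i∈U} W_i·p_i = 1, Σ_{i∈U} W_i·p_i·H_i = 0 }. Then L_R = Σ_{i∈U} W_i·log( 1/(n + κ·H_i)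 ), the supremum is attained at p_i = 1/(n + κ·H_i), and 2·(L_UR − L_R) = 2·Σ_{i∈U} W_i·log( 1 + κ·H_i/n ). (Exact expression of the pseudo-empirical likelihood-ratio in terms of the Lagrange multiplier κ.) -/
/-!
With `t i = n + κ * H i`, the inequality `log x ≤ x - 1` applied to `x = p i * t i` gives
`Σ W log p ≤ Σ W log (1 / t) + (n Σ W p + κ Σ W p H - Σ W)`, and the bracket vanishes for every
feasible `p`. The multiplier equations say exactly that `p = 1 / t` is feasible, so it attains
the supremum, and the likelihood ratio is `Σ W (log t - log n) = Σ W log (1 + κ H / n)`.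
-/

open Finset

theorem Real.log_le_log_one_div_add_mul_sub_one {p t : ℝ} (hp : 0 < p) (ht : 0 < t) :
    Real.log p ≤ Real.log (1 / t) + (p * t - 1) := by
  have h := Real.log_le_sub_one_of_pos (mul_pos hp ht)
  rw [Real.log_mul hp.ne' ht.ne'] at h
  rw [one_div, Real.log_inv]
  linarith

section PseudoEmpiricalLikelihood

variable {ι : Type*} [Fintype ι] {W H p : ι → ℝ} {c κ : ℝ}

theorem sum_mul_log_le_of_constraints (hW : ∀ i, 0 ≤ W i) (hsum : ∑ i, W i = c)
    (hpos : ∀ i, 0 < c + κ * H i) (hp : ∀ i, 0 < p i)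
    (h1 : ∑ i, W i * p i = 1) (h2 : ∑ i, W i * p i * H i = 0) :
    ∑ i, W i * Real.log (p i) ≤ ∑ i, W i * Real.log (1 / (c + κ * H i)) :=
  calc ∑ i, W i * Real.log (p i)
      ≤ ∑ i, W i * (Real.log (1 / (c + κ * H i)) + (p i * (c + κ * H i) - 1)) :=
        sum_le_sum fun i _ => mul_le_mul_of_nonneg_left
          (Real.log_le_log_one_div_add_mul_sub_one (hp i) (hpos i)) (hW i)
    _ = ∑ i, W i * Real.log (1 / (c + κ * H i)) +
          (c * ∑ i, W i * p i + κ * ∑ i, W i * p i * H i - ∑ i, W i) := by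
        simp only [mul_sum, ← sum_add_distrib, ← sum_sub_distrib]
        exact sum_congr rfl fun i _ => by ring
    _ = ∑ i, W i * Real.log (1 / (c + κ * H i)) := by rw [h1, h2, hsum]; ring

theorem isGreatest_weighted_log_of_lagrange (hW : ∀ i, 0 ≤ W i) (hsum : ∑ i, W i = c)
    (hpos : ∀ i, 0 < c + κ * H i)
    (hc1 : ∑ i, W i / (c + κ * H i) = 1) (hc2 : ∑ i, W i * H i / (c + κ * H i) = 0) :
    IsGreatest {L : ℝ | ∃ p : ι → ℝ, (∀ i, 0 < p i) ∧
        (∑ i, W i * p i = 1) ∧ (∑ i, W i * p i * H i = 0) ∧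
        L = ∑ i, W i * Real.log (p i)}
      (∑ i, W i * Real.log (1 / (c + κ * H i))) := by
  refine ⟨⟨fun i => 1 / (c + κ * H i), fun i => one_div_pos.mpr (hpos i), ?_, ?_, rfl⟩, ?_⟩
  · simpa only [mul_one_div] using hc1
  · simpa only [mul_one_div, div_mul_eq_mul_div] using hc2
  · rintro L ⟨p, hp, h1, h2, rfl⟩
    exact sum_mul_log_le_of_constraints hW hsum hpos hp h1 h2

theorem sum_mul_log_one_div_sub_sum_mul_log_one_div (hc : 0 < c)
    (hpos : ∀ i, 0 < c + κ * H i) :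
    ∑ i, W i * Real.log (1 / c) - ∑ i, W i * Real.log (1 / (c + κ * H i)) =
      ∑ i, W i * Real.log (1 + κ * H i / c) := by
  rw [← sum_sub_distrib]
  refine sum_congr rfl fun i _ => ?_
  have hdiv : 1 + κ * H i / c = (c + κ * H i) / c := by field_simp
  rw [hdiv, Real.log_div (hpos i).ne' hc.ne', one_div, one_div, Real.log_inv, Real.log_inv]
  ring

end PseudoEmpiricalLikelihood

/-- Exact expression of the pseudo-empirical likelihood-ratio in terms of the Lagrange
multiplier `κ`: the constrained maximum `L_R` equals `Σ W_i log (1/(n + κ·H_i))`, it is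
attained at `p_i = 1/(n + κ·H_i)`, and `2(L_UR − L_R) = 2 Σ W_i log(1 + κ·H_i/n)`. -/
theorem pel_ratio_expression
    (U : Type*) [Fintype U] [Nonempty U]
    (W : U → ℝ) (hW : ∀ i, 0 < W i)
    (hsum : ∑ i, W i = (Fintype.card U : ℝ))
    (H : U → ℝ) (κ : ℝ)
    (hpos : ∀ i, 0 < (Fintype.card U : ℝ) + κ * H i)
    (hc1 : ∑ i, W i / ((Fintype.card U : ℝ) + κ * H i) = 1)
    (hc2 : ∑ i, W i * H i / ((Fintype.card U : ℝ) + κ * H i) = 0)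
    (LUR LR : ℝ)
    (hLUR : LUR = ∑ i, W i * Real.log (1 / (Fintype.card U : ℝ)))
    (hLR : LR = sSup {L : ℝ | ∃ p : U → ℝ, (∀ i, 0 < p i) ∧
        (∑ i, W i * p i = 1) ∧ (∑ i, W i * p i * H i = 0) ∧
        L = ∑ i, W i * Real.log (p i)}) :
    LR = ∑ i, W i * Real.log (1 / ((Fintype.card U : ℝ) + κ * H i)) ∧
    (∑ i, W i * Real.log (1 / ((Fintype.card U : ℝ) + κ * H i))) ∈
      {L : ℝ | ∃ p : U → ℝ, (∀ i, 0 < p i) ∧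
        (∑ i, W i * p i = 1) ∧ (∑ i, W i * p i * H i = 0) ∧
        L = ∑ i, W i * Real.log (p i)} ∧
    2 * (LUR - LR) = 2 * ∑ i, W i * Real.log (1 + κ * H i / (Fintype.card U : ℝ)) := by
  have hgreatest := isGreatest_weighted_log_of_lagrange (fun i => (hW i).le) hsum hpos hc1 hc2
  have hLRv : LR = ∑ i, W i * Real.log (1 / ((Fintype.card U : ℝ) + κ * H i)) :=
    hLR.trans hgreatest.csSup_eq
  have hcard : (0 : ℝ) < Fintype.card U := by exact_mod_cast Fintype.card_pos
  refine ⟨hLRv, hgreatest.1, ?_⟩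
  rw [hLUR, hLRv, sum_mul_log_one_div_sub_sum_mul_log_one_div hcard hpos]
end
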